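/- For every k ≥ 1 and m ≥ 1, the k-limited propagating 0L system over {a,b,c} with axiom c and rules {a→a, a→bb, b→b, c→a^{km}}, where each step rewrites exactly min(k, |w|_x) occurrences of each letter x (choosing a rule for each rewritten occurrence), generates exactly the language L_m = {c} ∪ {x₁⋯x_{km} | x_i ∈ {a, bb}}. -/

import Mathlib

/-- One k-limited derivation step: for each letter x, exactly min(k, |v|_x) occurrences
of x in v are rewritten, each by some rule of R with left side x; the remaining
occurrences stay unchanged. -/
def klStep {V : Type*} [DecidableEq V] (k : ℕ) (R : Set (V × List V)) (v w : List V) : Prop :=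
  ∃ (S : Finset (Fin v.length)) (f : Fin v.length → List V),
    (∀ x : V, (S.filter (fun i => v.get i = x)).card = min k (v.count x)) ∧
    (∀ i ∈ S, (v.get i, f i) ∈ R) ∧
    (∀ i, i ∉ S → f i = [v.get i]) ∧
    w = (List.ofFn f).flatten

/-- Deterministic k-limited step with rule function P. -/
def detStep {V : Type*} [DecidableEq V] (k : ℕ) (P : V → List V) : List V → List V → Prop :=
  klStep k {p | p.2 = P p.1}

/-- The language generated from axiom ω by a step relation. -/
def lang {V : Type*} (step : List V → List V → Prop) (ω : List V) : Set (List V) :=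
  {w | Relation.ReflTransGen step ω w}

inductive V3 : Type
  | a | b | c
deriving DecidableEq

instance instFintypeV3 : Fintype V3 where
  elems := {V3.a, V3.b, V3.c}
  complete := by intro x; cases x <;> simp

open V3

/-- The rule set {a→a, a→bb, b→b, c→a^{km}}. -/
def R10 (k m : ℕ) : Set (V3 × List V3) :=
  {(a, [a]), (a, [b, b]), (b, [b]), (c, List.replicate (k * m) a)}

def Lm (k m : ℕ) : Set (List V3) :=
  {[c]} ∪ {z | ∃ bs : List (List V3),
    bs.length = k * m ∧ (∀ x ∈ bs, x = [a] ∨ x = [b, b]) ∧ z = bs.flatten}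

/-! A step rewrites each occurrence independently, by a rule or by itself. Replacing every `a`
by `a` or `bb` and every `b` by `b` maps a word of `k m` blocks `a`, `bb` to another one, and `c`
only becomes `a^{km}`, so every derived word lies in `L_m`. Conversely, since `a → a` and `b → b`
are rules, one step may turn a single `a` into `bb` and fill the remaining quota with identity
rewrites; doing so block by block turns `a^{km}` into any block word. -/

theorem List.card_filter_get_eq_count {α : Type*} [DecidableEq α] (v : List α) (x : α) :
    (Finset.univ.filter (fun i : Fin v.length => v.get i = x)).card = v.count x := by
  conv_rhs => rw [← List.map_get_finRange v]
  rw [List.count, List.countP_map, Fin.univ_def]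
  simp only [Finset.filter, Finset.card, Multiset.filter_coe, Multiset.coe_card,
    ← List.countP_eq_length_filter]
  exact List.countP_congr fun i _ => by simp [List.get_eq_getElem]

section klStep

variable {V : Type*} [DecidableEq V] {k : ℕ} {R : Set (V × List V)}

theorem klStep.exists_forall₂ {v w : List V} (h : klStep k R v w) :
    ∃ us : List (List V), List.Forall₂ (fun x u => (x, u) ∈ R ∨ u = [x]) v us ∧
      w = us.flatten := by
  obtain ⟨S, f, -, hrule, hid, rfl⟩ := h
  refine ⟨List.ofFn f, List.forall₂_iff_get.2 ⟨by simp, fun i hi _ => ?_⟩, rfl⟩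
  simp only [List.get_ofFn]
  by_cases hiS : ⟨i, hi⟩ ∈ S
  · exact .inl (hrule _ hiS)
  · exact .inr (hid _ hiS)

theorem klStep_of_subset {v : List V} (D : Finset (Fin v.length)) (g : Fin v.length → List V)
    (hD : ∀ i ∈ D, (v.get i, g i) ∈ R) (hcard : ∀ x, (D.filter (v.get · = x)).card ≤ k)
    (hg : ∀ i ∉ D, g i = [v.get i]) (hid : ∀ i ∉ D, (v.get i, [v.get i]) ∈ R) :
    klStep k R v (List.ofFn g).flatten := by
  have hT : ∀ x, ∃ T : Finset (Fin v.length), D.filter (v.get · = x) ⊆ T ∧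
      T ⊆ Finset.univ.filter (v.get · = x) ∧ T.card = min k (v.count x) := fun x =>
    Finset.exists_subsuperset_card_eq (Finset.filter_subset_filter _ D.subset_univ)
      (le_min (hcard x) ((Finset.card_le_card (Finset.filter_subset_filter _ D.subset_univ)).trans
        (v.card_filter_get_eq_count x).le))
      ((min_le_right _ _).trans (v.card_filter_get_eq_count x).ge)
  choose T hDT hTx hTcard using hT
  have hget : ∀ {x i}, i ∈ T x → v.get i = x := fun hi => (Finset.mem_filter.1 (hTx _ hi)).2
  have hfilter :
      ∀ x, (Finset.univ.filter fun i => i ∈ T (v.get i)).filter (v.get · = x) = T x := by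
    intro x
    ext i
    simp only [Finset.mem_filter, Finset.mem_univ, true_and]
    exact ⟨fun ⟨hi, hx⟩ => hx ▸ hi, fun hi => ⟨(hget hi).symm ▸ hi, hget hi⟩⟩
  have hDsub : ∀ i ∈ D, i ∈ T (v.get i) := fun i hi => hDT _ (Finset.mem_filter.2 ⟨hi, rfl⟩)
  refine ⟨Finset.univ.filter fun i => i ∈ T (v.get i), g, fun x => (hfilter x).symm ▸ hTcard x,
    fun i _ => ?_, fun i hi => hg i fun hiD => hi (by simpa using hDsub i hiD), rfl⟩
  by_cases hiD : i ∈ D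
  · exact hD i hiD
  · exact hg i hiD ▸ hid i hiD

theorem klStep_append_cons (hk : 1 ≤ k) {u t : List V} {x : V} {y : List V}
    (hxy : (x, y) ∈ R) (hu : ∀ z ∈ u, (z, [z]) ∈ R) (ht : ∀ z ∈ t, (z, [z]) ∈ R) :
    klStep k R (u ++ x :: t) (u ++ y ++ t) := by
  set v := u ++ x :: t
  have hn : u.length < v.length := by simp [v]
  set n : Fin v.length := ⟨u.length, hn⟩
  have hvn : v.get n = x := by simp [v, n]
  let g : Fin v.length → List V := fun i => if i = n then y else [v.get i]
  have hg : List.ofFn g = u.map ([·]) ++ y :: t.map ([·]) := by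
    refine List.ext_getElem (by simp [v, add_assoc]) fun j hj _ => ?_
    simp only [List.getElem_ofFn, g, n, Fin.ext_iff, List.get_eq_getElem, v]
    rcases lt_trichotomy j u.length with hj | rfl | hj
    · simp [hj, hj.ne, List.getElem_append_left]
    · simp
    · obtain ⟨j, rfl⟩ := Nat.exists_eq_add_of_lt hj
      simp [List.getElem_append_right, add_assoc]
  have := klStep_of_subset (R := R) (k := k) {n} g ?_ ?_ ?_ ?_
  · simpa [hg, ← List.flatMap_def, List.flatMap_singleton'] using this
  · intro i hi
    rw [Finset.mem_singleton.1 hi, hvn]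
    simpa [g] using hxy
  · exact fun _ => (Finset.card_le_card (Finset.filter_subset _ _)).trans (by simpa using hk)
  · exact fun i hi => if_neg (Finset.notMem_singleton.1 hi)
  · intro i hi
    have hi' : (i : ℕ) ≠ u.length := fun h => hi (Finset.mem_singleton.2 (Fin.ext h))
    rcases lt_or_gt_of_ne hi' with h | h
    · have : v.get i = u[(i : ℕ)] := by simp [v, List.getElem_append_left h]
      exact this ▸ hu _ (List.getElem_mem _)
    · obtain ⟨j, hj⟩ := Nat.exists_eq_add_of_lt h
      have hjt : j < t.length := by
        have := i.isLt
        simp only [v, List.length_append, List.length_cons] at this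
        omega
      have : v.get i = t[j] := by simp [v, hj, List.getElem_append_right, add_assoc]
      exact this ▸ ht _ (List.getElem_mem _)

end klStep

theorem mem_R10_self {k m : ℕ} {x : V3} (hx : x ≠ c) : (x, [x]) ∈ R10 k m := by
  cases x <;> simp_all [R10]

section rewrites

variable {k m : ℕ} {u : List V3}

theorem eq_a_or_eq_bb_of_R10 (h : (a, u) ∈ R10 k m ∨ u = [a]) : u = [a] ∨ u = [b, b] := by
  simp [R10] at h
  tauto

theorem eq_b_of_R10 (h : (b, u) ∈ R10 k m ∨ u = [b]) : u = [b] := by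
  simpa [R10] using h

theorem eq_replicate_or_eq_c_of_R10 (h : (c, u) ∈ R10 k m ∨ u = [c]) :
    u = List.replicate (k * m) a ∨ u = [c] := by
  simpa [R10, eq_comm] using h

end rewrites

def blockWords (n : ℕ) : Set (List V3) :=
  {z | ∃ bs : List (List V3), bs.length = n ∧ (∀ x ∈ bs, x = [a] ∨ x = [b, b]) ∧ z = bs.flatten}

theorem replicate_a_mem_blockWords (n : ℕ) : List.replicate n a ∈ blockWords n :=
  ⟨List.replicate n [a], by simp, fun x hx => .inl (List.eq_of_mem_replicate hx), by simp⟩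

theorem flatten_mem_blockWords {k m : ℕ} {bs : List (List V3)}
    (hbs : ∀ x ∈ bs, x = [a] ∨ x = [b, b]) {us : List (List V3)}
    (h : List.Forall₂ (fun x u => (x, u) ∈ R10 k m ∨ u = [x]) bs.flatten us) :
    us.flatten ∈ blockWords bs.length := by
  induction bs generalizing us with
  | nil => exact ⟨[], rfl, by simp, by simp_all⟩
  | cons blk bs ih =>
    have hrest : ∀ x ∈ bs, x = [a] ∨ x = [b, b] := fun x hx => hbs x (List.mem_cons_of_mem _ hx)
    rcases hbs blk List.mem_cons_self with rfl | rfl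
    · obtain ⟨u, us, hu, hus, rfl⟩ := List.forall₂_cons_left_iff.1 (by simpa using h)
      obtain ⟨bs', hlen, hbs', hflat⟩ := ih hrest hus
      exact ⟨u :: bs', by simp [hlen], List.forall_mem_cons.2 ⟨eq_a_or_eq_bb_of_R10 hu, hbs'⟩,
        by simp [hflat]⟩
    · obtain ⟨u₁, us, hu₁, hus₁, rfl⟩ := List.forall₂_cons_left_iff.1 (by simpa using h)
      obtain ⟨u₂, us, hu₂, hus₂, rfl⟩ := List.forall₂_cons_left_iff.1 hus₁
      obtain ⟨bs', hlen, hbs', hflat⟩ := ih hrest hus₂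
      refine ⟨[b, b] :: bs', by simp [hlen], List.forall_mem_cons.2 ⟨.inr rfl, hbs'⟩, ?_⟩
      simp [eq_b_of_R10 hu₁, eq_b_of_R10 hu₂, hflat]

theorem Lm_eq_union (k m : ℕ) : Lm k m = {[c]} ∪ blockWords (k * m) := rfl

theorem mem_Lm_of_klStep {k m : ℕ} {v w : List V3} (hv : v ∈ Lm k m)
    (h : klStep k (R10 k m) v w) : w ∈ Lm k m := by
  obtain ⟨us, hus, rfl⟩ := h.exists_forall₂
  rw [Lm_eq_union] at hv ⊢
  rcases hv with rfl | ⟨bs, hlen, hbs, rfl⟩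
  · obtain ⟨u, _, hu, hnil, rfl⟩ := List.forall₂_cons_left_iff.1 hus
    obtain rfl := List.forall₂_nil_left_iff.1 hnil
    rcases eq_replicate_or_eq_c_of_R10 hu with rfl | rfl
    · simpa using Or.inr (replicate_a_mem_blockWords (k * m))
    · exact .inl rfl
  · exact .inr (hlen ▸ flatten_mem_blockWords hbs hus)

theorem reflTransGen_append_replicate_a {k m : ℕ} (hk : 1 ≤ k) {bs : List (List V3)}
    (hbs : ∀ x ∈ bs, x = [a] ∨ x = [b, b]) {p : List V3} (hp : c ∉ p) :
    Relation.ReflTransGen (klStep k (R10 k m)) (p ++ List.replicate bs.length a)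
      (p ++ bs.flatten) := by
  induction bs generalizing p with
  | nil => simpa using .refl
  | cons blk bs ih =>
    have hbs' : ∀ x ∈ bs, x = [a] ∨ x = [b, b] := fun x hx => hbs x (List.mem_cons_of_mem _ hx)
    have hid : ∀ {q : List V3}, c ∉ q → ∀ z ∈ q, (z, [z]) ∈ R10 k m :=
      fun hq z hz => mem_R10_self fun h => hq (h ▸ hz)
    rcases hbs blk List.mem_cons_self with rfl | rfl
    · simpa [List.replicate_succ] using ih hbs' (p := p ++ [a]) (by simpa using hp)
    · have hstep : klStep k (R10 k m) (p ++ a :: List.replicate bs.length a)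
          (p ++ [b, b] ++ List.replicate bs.length a) :=
        klStep_append_cons hk (by simp [R10]) (hid hp) (hid (by simp))
      have := Relation.ReflTransGen.head hstep (ih hbs' (p := p ++ [b, b]) (by simpa using hp))
      simpa [List.replicate_succ] using this

theorem klStep_c_replicate {k m : ℕ} (hk : 1 ≤ k) :
    klStep k (R10 k m) [c] (List.replicate (k * m) a) := by
  simpa using klStep_append_cons (u := []) (t := []) (R := R10 k m) hk (by simp [R10])
    (by simp) (by simp)

theorem stmt10_general (k m : ℕ) (hk : 1 ≤ k) :
    lang (klStep k (R10 k m)) [c] = Lm k m := by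
  ext z
  refine ⟨fun hz => ?_, ?_⟩
  · induction hz with
    | refl => exact .inl rfl
    | tail _ hstep ih => exact mem_Lm_of_klStep ih hstep
  · rintro (rfl | ⟨bs, hlen, hbs, rfl⟩)
    · exact .refl
    · have := reflTransGen_append_replicate_a (m := m) hk hbs (p := []) List.not_mem_nil
      rw [List.nil_append, List.nil_append, hlen] at this
      exact this.head (klStep_c_replicate hk)

/-- The kℓP0L system with axiom c and rules {a→a, a→bb, b→b, c→a^{km}} generates L_m. -/
theorem stmt10 (k m : ℕ) (hk : 1 ≤ k) (hm : 1 ≤ m) :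
    lang (klStep k (R10 k m)) [c] = Lm k m :=
  stmt10_general k m hk
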